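/- arXiv:1406.4575 — 4 statements merged into one kernel-verified Lean document; each statement's English description precedes it below -/
import Mathlib

section
/- Let A = (Σ, Q, q₀, δ, F) and A' = (Σ, Q, q₀, δ, G) be two nondeterministic Büchi automata over the same states and transitions, with G ⊇ F. If for every state q ∈ G, every elementary cycle (simple cycle) of the automaton containing q also contains at least one state in F, then L(A) = L(A'). -/
/-- A nondeterministic Büchi automaton. -/
structure NBW (A Q : Type*) where
  init : Q
  trans : Q → A → Set Q
  acc : Set Q

/-- `ρ` is a run of the automaton on the infinite word `w`. -/
def NBW.IsRun {A Q : Type*} (M : NBW A Q) (w : ℕ → A) (ρ : ℕ → Q) : Prop :=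
  ρ 0 = M.init ∧ ∀ i, ρ (i + 1) ∈ M.trans (ρ i) (w i)

/-- A run is accepting iff some accepting state occurs infinitely often. -/
def NBW.Accepting {A Q : Type*} (M : NBW A Q) (ρ : ℕ → Q) : Prop :=
  ∃ q ∈ M.acc, ∀ N, ∃ i ≥ N, ρ i = q

/-- The language of the automaton. -/
def NBW.Lang {A Q : Type*} (M : NBW A Q) : Set (ℕ → A) :=
  {w | ∃ ρ, M.IsRun w ρ ∧ M.Accepting ρ}

/-- An elementary (simple) cycle of the transition graph: a nontrivial cycle
visiting no state twice except that the first and last states coincide. -/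
def IsElemCycle {A Q : Type*} (δ : Q → A → Set Q) (m : ℕ) (c : Fin (m + 1) → Q) : Prop :=
  0 < m ∧ c 0 = c (Fin.last m) ∧
    (∀ i : Fin m, ∃ a, c i.succ ∈ δ (c i.castSucc) a) ∧
    Function.Injective fun i : Fin m => c i.castSucc

/-- Any closed walk at `q ∈ G` visits an accepting state. -/
lemma walkF {A Q : Type*} (M : NBW A Q) (G : Set Q)
    (hcyc : ∀ q ∈ G, ∀ (m : ℕ) (c : Fin (m + 1) → Q), IsElemCycle M.trans m c →
      (∃ i, c i = q) → ∃ i, c i ∈ M.acc)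
    (q : Q) (hq : q ∈ G) :
    ∀ m, 0 < m → ∀ d : ℕ → Q, d 0 = q → d m = q →
      (∀ i < m, ∃ a, d (i + 1) ∈ M.trans (d i) a) → ∃ k ≤ m, d k ∈ M.acc := by
  intro m
  induction m using Nat.strong_induction_on with
  | _ m IH =>
    intro hm d h0 hmq hedge
    by_cases hinj : ∀ i < m, ∀ j < m, d i = d j → i = j
    · set c : Fin (m + 1) → Q := fun i => d i.val with hc
      have hec : IsElemCycle M.trans m c := by
        refine ⟨hm, ?_, ?_, ?_⟩
        · simp [hc, h0, hmq]
        · intro i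
          have := hedge i.val i.isLt
          simpa [hc, Fin.val_succ] using this
        · intro i j hij
          exact Fin.ext (hinj i.val i.isLt j.val j.isLt (by simpa [hc] using hij))
      obtain ⟨i, hi⟩ := hcyc q hq m c hec ⟨0, by simpa [hc] using h0⟩
      exact ⟨i.val, Nat.lt_succ_iff.mp i.isLt, hi⟩
    · push_neg at hinj
      obtain ⟨i, hi, j, hj, heq, hne⟩ := hinj
      have key : ∀ i j, i < j → j < m → d i = d j → ∃ k ≤ m, d k ∈ M.acc := by
        clear hi hj heq hne
        intro i j hij hjm heq
        set d' : ℕ → Q := fun k => if k ≤ i then d k else d (k + (j - i)) with hd'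
        have e1 : ∀ k, k ≤ i → d' k = d k := by
          intro k hk; simp [hd', hk]
        have e2 : ∀ k, i < k → d' k = d (k + (j - i)) := by
          intro k hk; simp [hd', Nat.not_le.mpr hk]
        have h0' : d' 0 = q := by rw [e1 0 (Nat.zero_le i), h0]
        have hmq' : d' (m - (j - i)) = q := by
          rw [e2 _ (by omega), (by omega : m - (j - i) + (j - i) = m), hmq]
        have hedge' : ∀ k < m - (j - i), ∃ a, d' (k + 1) ∈ M.trans (d' k) a := by
          intro k hk
          rcases Nat.lt_or_ge k i with hki | hki
          · rw [e1 k (by omega), e1 (k + 1) (by omega)]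
            exact hedge k (by omega)
          · rcases Nat.eq_or_lt_of_le hki with hki' | hki'
            · rw [e1 k (by omega), e2 (k + 1) (by omega),
                (by omega : k + 1 + (j - i) = j + 1), ← hki', heq]
              exact hedge j hjm
            · rw [e2 k (by omega), e2 (k + 1) (by omega),
                (by omega : k + 1 + (j - i) = (k + (j - i)) + 1)]
              exact hedge (k + (j - i)) (by omega)
        obtain ⟨k, hk, hkacc⟩ := IH (m - (j - i)) (by omega) (by omega) d' h0' hmq' hedge'
        by_cases hki : k ≤ i
        · rw [e1 k hki] at hkacc
          exact ⟨k, by omega, hkacc⟩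
        · rw [e2 k (by omega)] at hkacc
          exact ⟨k + (j - i), by omega, hkacc⟩
      rcases Nat.lt_or_ge i j with h | h
      · exact key i j h hj heq
      · exact key j i (by omega) hi heq.symm

theorem stmt0 {A Q : Type*} [Fintype Q] (M : NBW A Q) (G : Set Q) (hFG : M.acc ⊆ G)
    (hcyc : ∀ q ∈ G, ∀ (m : ℕ) (c : Fin (m + 1) → Q), IsElemCycle M.trans m c →
      (∃ i, c i = q) → ∃ i, c i ∈ M.acc) :
    M.Lang = (NBW.mk M.init M.trans G).Lang := by
  ext w
  constructor
  · rintro ⟨ρ, hr, q, hq, hinf⟩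
    exact ⟨ρ, hr, q, hFG hq, hinf⟩
  · rintro ⟨ρ, hr, q, hq, hinf⟩
    refine ⟨ρ, hr, ?_⟩
    -- the run visits accepting states unboundedly often
    have hacc : ∀ N, ∃ k ≥ N, ρ k ∈ M.acc := by
      intro N
      obtain ⟨i, hiN, hiq⟩ := hinf N
      obtain ⟨j, hji, hjq⟩ := hinf (i + 1)
      obtain ⟨k, hk, hkacc⟩ := walkF M G hcyc q hq (j - i) (by omega)
        (fun t => ρ (i + t)) (by simpa using hiq)
        (by show ρ (i + (j - i)) = q; rw [(by omega : i + (j - i) = j)]; exact hjq)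
        (fun t ht => by
          have := hr.2 (i + t)
          exact ⟨w (i + t), by simpa [Nat.add_assoc] using this⟩)
      exact ⟨i + k, by omega, hkacc⟩
    -- pigeonhole: some accepting state occurs infinitely often
    by_contra hco
    simp only [NBW.Accepting] at hco
    push_neg at hco
    have h2 : ∀ f : Q, ∃ N, f ∈ M.acc → ∀ i ≥ N, ρ i ≠ f := by
      intro f
      by_cases hf : f ∈ M.acc
      · obtain ⟨N, hN⟩ := hco f hf
        exact ⟨N, fun _ i hi => hN i hi⟩
      · exact ⟨0, fun h => absurd h hf⟩
    choose N' hN' using h2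
    obtain ⟨k, hk, hkacc⟩ := hacc (Finset.univ.sup N')
    exact hN' (ρ k) hkacc k (le_trans (Finset.le_sup (Finset.mem_univ (ρ k))) hk) rfl
end

section
/- If ρ = q₀q₁⋯ is a run of a Büchi automaton A with acceptance set G such that some state q ∈ G occurs infinitely often in ρ, and every elementary cycle through q contains a state of F ⊆ G, then some state of F occurs infinitely often in ρ. -/
/-- Any cycle through `q` (as a path) contains an accepting state, provided every
elementary cycle through `q` does. -/
lemma cycle_acc {A Q : Type*} (M : NBW A Q) (q : Q)
    (hcyc : ∀ (m : ℕ) (c : Fin (m + 1) → Q), IsElemCycle M.trans m c →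
      (∃ i, c i = q) → ∃ i, c i ∈ M.acc) :
    ∀ n, 0 < n → ∀ p : ℕ → Q, p 0 = q → p n = q →
      (∀ k < n, ∃ a, p (k + 1) ∈ M.trans (p k) a) → ∃ m ≤ n, p m ∈ M.acc := by
  intro n
  induction n using Nat.strong_induction_on with
  | _ n IH =>
    intro hn p hp0 hpn hedge
    by_cases hinj : Function.Injective fun i : Fin n => p i
    · -- elementary cycle
      obtain ⟨i, hi⟩ := hcyc n (fun i : Fin (n + 1) => p i)
        ⟨hn, by simp [hp0, hpn, Fin.last], fun i => by
          simpa using hedge i i.isLt, by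
          intro a b hab
          exact hinj (by simpa using hab)⟩
        ⟨0, by simpa using hp0⟩
      exact ⟨i, Nat.le_of_lt_succ i.isLt, hi⟩
    · rw [Function.not_injective_iff] at hinj
      obtain ⟨a, b, hab, hne⟩ := hinj
      -- get natural numbers i < j < n with p i = p j
      obtain ⟨i, j, hij, hjn, hpij⟩ : ∃ i j : ℕ, i < j ∧ j < n ∧ p i = p j := by
        rcases lt_trichotomy a b with h | h | h
        · exact ⟨a, b, h, b.isLt, hab⟩
        · exact absurd h hne
        · exact ⟨b, a, h, a.isLt, hab.symm⟩
      set d := j - i with hd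
      set n' := n - d with hn'
      have hd1 : 1 ≤ d := by omega
      have hdn : d < n := by omega
      have hn'1 : 0 < n' := by omega
      have hn'n : n' < n := by omega
      have hin' : i < n' := by omega
      set p' : ℕ → Q := fun k => if k ≤ i then p k else p (k + d) with hp'
      have h0 : p' 0 = q := by simp [hp', hp0]
      have hN : p' n' = q := by
        have : ¬ n' ≤ i := by omega
        simp only [hp', this, if_false]
        have : n' + d = n := by omega
        rw [this, hpn]
      have hE : ∀ k < n', ∃ a, p' (k + 1) ∈ M.trans (p' k) a := by
        intro k hk
        by_cases h1 : k + 1 ≤ i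
        · simp only [hp', h1, if_pos (by omega : k ≤ i)]
          exact hedge k (by omega)
        · by_cases h2 : k ≤ i
          · have hki : k = i := by omega
            subst hki
            have e1 : p' k = p j := by
              rw [hp']; simp only [if_pos h2]; exact hpij
            have e2 : p' (k + 1) = p (j + 1) := by
              rw [hp']; simp only [if_neg h1]; congr 1; omega
            rw [e1, e2]; exact hedge j hjn
          · simp only [hp', if_neg h2, if_neg h1]
            have : k + 1 + d = k + d + 1 := by omega
            rw [this]
            exact hedge (k + d) (by omega)
      obtain ⟨m, hm, hmacc⟩ := IH n' hn'n hn'1 p' h0 hN hE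
      by_cases hmi : m ≤ i
      · exact ⟨m, by omega, by simpa [hp', hmi] using hmacc⟩
      · exact ⟨m + d, by omega, by simpa [hp', hmi] using hmacc⟩

theorem stmt1 {A Q : Type*} [Fintype Q] (M : NBW A Q) (G : Set Q) (hFG : M.acc ⊆ G)
    (w : ℕ → A) (ρ : ℕ → Q) (hrun : M.IsRun w ρ)
    (q : Q) (hqG : q ∈ G) (hinf : ∀ N, ∃ i ≥ N, ρ i = q)
    (hcyc : ∀ (m : ℕ) (c : Fin (m + 1) → Q), IsElemCycle M.trans m c →
      (∃ i, c i = q) → ∃ i, c i ∈ M.acc) :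
    ∃ p ∈ M.acc, ∀ N, ∃ i ≥ N, ρ i = p := by
  have hacc : ∀ N, ∃ i ≥ N, ρ i ∈ M.acc := by
    intro N
    obtain ⟨i, hiN, hiq⟩ := hinf N
    obtain ⟨j, hji, hjq⟩ := hinf (i + 1)
    have hn : 0 < j - i := by omega
    obtain ⟨m, hm, hmacc⟩ := cycle_acc M q hcyc (j - i) hn (fun k => ρ (i + k))
      (by simpa using hiq)
      (by show ρ (i + (j - i)) = q; rw [show i + (j - i) = j by omega]; exact hjq)
      (fun k _ => ⟨w (i + k), by
        show ρ (i + (k + 1)) ∈ M.trans (ρ (i + k)) (w (i + k))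
        rw [show i + (k + 1) = (i + k) + 1 by omega]; exact hrun.2 (i + k)⟩)
    exact ⟨i + m, by omega, hmacc⟩
  by_contra h
  push_neg at h
  have hfin : ∀ p : Q, ∃ N, p ∈ M.acc → ∀ i ≥ N, ρ i ≠ p := by
    intro p
    by_cases hp : p ∈ M.acc
    · obtain ⟨N, hN⟩ := h p hp
      exact ⟨N, fun _ i hi => hN i hi⟩
    · exact ⟨0, fun hp' => absurd hp' hp⟩
  choose f hf using hfin
  obtain ⟨i, hi, hiacc⟩ := hacc (Finset.univ.sup f)
  exact hf (ρ i) hiacc i (le_trans (Finset.le_sup (Finset.mem_univ _)) hi) rfl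
end

section
/- Let P = (Σ, Q, q₀, δ, F) be an NPW with F : Q → {0,…,2r}, and let [q]_{2k} denote the ≡_{2k}-equivalence class of q. Define the NBW A' = (Σ, S, s₀, Δ, G) with S = [Q] × {0,2,…,2r}, s₀ = ([q₀]₀, 0), transitions: ([q]_{2k}, 2k) ∈ Δ(([p]₀, 0), a) iff k > 0, δ(p,a) ∩ [q]_{2k} ≠ ∅, and F(q) = 2k; ([q]_{2k}, 2k) ∈ Δ(([p]_{2k}, 2k), a) iff δ(p,a) ∩ [q]_{2k} ≠ ∅ and F(q) ≥ 2k; and G = {([q]_{2k}, 2k) ∈ S | F(q) = 2k}. Then every word accepted by P is accepted by A'. -/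
/-- A nondeterministic parity automaton: `par` assigns each state its parity. -/
structure NPW (A Q : Type*) where
  init : Q
  trans : Q → A → Set Q
  par : Q → ℕ

/-- The set of states occurring infinitely often in a run. -/
def InfOcc {Q : Type*} (ρ : ℕ → Q) : Set Q := {q | ∀ N, ∃ i ≥ N, ρ i = q}

/-- The parity acceptance condition: the minimum parity among states occurring
infinitely often is even. -/
def ParityAccepting {Q : Type*} (F : Q → ℕ) (ρ : ℕ → Q) : Prop :=
  ∃ q ∈ InfOcc ρ, Even (F q) ∧ ∀ p ∈ InfOcc ρ, F q ≤ F p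

def NPW.IsRun {A Q : Type*} (P : NPW A Q) (w : ℕ → A) (ρ : ℕ → Q) : Prop :=
  ρ 0 = P.init ∧ ∀ i, ρ (i + 1) ∈ P.trans (ρ i) (w i)

def NPW.Lang {A Q : Type*} (P : NPW A Q) : Set (ℕ → A) :=
  {w | ∃ ρ, P.IsRun w ρ ∧ ParityAccepting P.par ρ}

/-- The merging relation `≡_e` (for an even parity `e`). -/
def EqvPar {A Q : Type*} (P : NPW A Q) (e : ℕ) (p q : Q) : Prop :=
  (∀ a, P.trans p a = P.trans q a) ∧
    ((P.par p = e ∧ P.par q = e) ∨ (e < P.par p ∧ e < P.par q) ∨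
     (P.par p < e ∧ P.par q < e))

/-- The `≡_e`-equivalence class `[q]_e`. -/
def ClsPar {A Q : Type*} (P : NPW A Q) (e : ℕ) (q : Q) : Set Q :=
  {p | EqvPar P e p q}

/-- The improved conversion from an NPW (parities bounded by `2*r`) to an NBW:
states are pairs `([q]_{2k}, 2k)` of an equivalence class together with the
guessed minimal even parity (the second component `0` also serves as "no guess"). -/
def improvedConv {A Q : Type*} (P : NPW A Q) (r : ℕ) : NBW A (Set Q × ℕ) where
  init := (ClsPar P 0 P.init, 0)
  trans := fun s a =>
    {t | -- [TR1]
      (∃ p q k, 0 < k ∧ k ≤ r ∧ s = (ClsPar P 0 p, 0) ∧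
        t = (ClsPar P (2 * k) q, 2 * k) ∧
        (P.trans p a ∩ ClsPar P (2 * k) q).Nonempty ∧ P.par q = 2 * k) ∨
      -- [TR2]
      (∃ p q k, k ≤ r ∧ s = (ClsPar P (2 * k) p, 2 * k) ∧
        t = (ClsPar P (2 * k) q, 2 * k) ∧
        (P.trans p a ∩ ClsPar P (2 * k) q).Nonempty ∧ 2 * k ≤ P.par q)}
  acc := {s | ∃ q k, k ≤ r ∧ s = (ClsPar P (2 * k) q, 2 * k) ∧ P.par q = 2 * k}

lemma mem_clsPar_self {A Q : Type*} (P : NPW A Q) (e : ℕ) (q : Q) :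
    q ∈ ClsPar P e q := ⟨fun _ => rfl, by omega⟩

lemma eventually_infOcc {Q : Type*} [Fintype Q] (ρ : ℕ → Q) :
    ∃ M, ∀ i ≥ M, ρ i ∈ InfOcc ρ := by
  have h : ∀ q : Q, ∃ N, q ∈ InfOcc ρ ∨ ∀ i ≥ N, ρ i ≠ q := by
    intro q
    by_cases hq : q ∈ InfOcc ρ
    · exact ⟨0, Or.inl hq⟩
    · simp only [InfOcc, Set.mem_setOf_eq, not_forall] at hq
      obtain ⟨N, hN⟩ := hq
      exact ⟨N, Or.inr fun i hi hiq => hN ⟨i, hi, hiq⟩⟩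
  choose N hN using h
  refine ⟨Finset.univ.sup N, fun i hi => ?_⟩
  rcases hN (ρ i) with h | h
  · exact h
  · exact absurd rfl (h i (le_trans (Finset.le_sup (Finset.mem_univ _)) hi))

theorem stmt4 {A Q : Type*} [Fintype Q] (P : NPW A Q) (r : ℕ)
    (hbound : ∀ q, P.par q ≤ 2 * r) :
    P.Lang ⊆ (improvedConv P r).Lang := by
  rintro w ⟨ρ, ⟨h0, hstep⟩, q, hqinf, hqeven, hqmin⟩
  obtain ⟨M, hM⟩ := eventually_infOcc ρ
  obtain ⟨k, hk⟩ : ∃ k, P.par q = 2 * k := by obtain ⟨m, hm⟩ := hqeven; exact ⟨m, by omega⟩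
  have hkr : k ≤ r := by have := hbound q; omega
  have hge : ∀ i ≥ M, 2 * k ≤ P.par (ρ i) := fun i hi => hk ▸ hqmin _ (hM i hi)
  rcases Nat.eq_zero_or_pos k with hk0 | hk0
  · -- stay at level 0 forever
    subst hk0
    refine ⟨fun i => (ClsPar P 0 (ρ i), 0), ⟨by simp [improvedConv, h0], fun i => ?_⟩, ?_⟩
    · refine Or.inr ⟨ρ i, ρ (i + 1), 0, Nat.zero_le r, by simp, by simp,
        ⟨ρ (i + 1), hstep i, mem_clsPar_self P _ _⟩, Nat.zero_le _⟩
    · refine ⟨(ClsPar P 0 q, 0), ⟨q, 0, Nat.zero_le r, by simp, by simpa using hk⟩, fun N => ?_⟩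
      obtain ⟨i, hi, hiq⟩ := hqinf N
      exact ⟨i, hi, by simp [hiq]⟩
  · -- switch to level 2k at some point i0 ≥ M where ρ (i0+1) = q
    obtain ⟨i0, hi0M, hi0q⟩ := hqinf (M + 1)
    have hi0pos : 1 ≤ i0 := le_trans (Nat.le_add_left 1 M) hi0M
    set σ : ℕ → Set Q × ℕ := fun i =>
      if i < i0 then (ClsPar P 0 (ρ i), 0) else (ClsPar P (2 * k) (ρ i), 2 * k) with hσ
    refine ⟨σ, ⟨?_, fun i => ?_⟩, ?_⟩
    · simp [σ, improvedConv, h0, Nat.lt_of_lt_of_le Nat.zero_lt_one hi0pos]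
    · rcases lt_trichotomy (i + 1) i0 with h | h | h
      · have hi : i < i0 := Nat.lt_of_succ_lt h
        refine Or.inr ⟨ρ i, ρ (i + 1), 0, Nat.zero_le r, by simp [σ, hi], by simp [σ, h],
          ⟨ρ (i + 1), hstep i, mem_clsPar_self P _ _⟩, Nat.zero_le _⟩
      · have hi : i < i0 := by omega
        refine Or.inl ⟨ρ i, ρ (i + 1), k, hk0, hkr, by simp [σ, hi], by simp [σ, h], 
          ⟨ρ (i + 1), hstep i, mem_clsPar_self P _ _⟩, ?_⟩
        rw [h, hi0q, hk]
      · have hi : ¬ i < i0 := by omega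
        have hi1 : ¬ i + 1 < i0 := by omega
        refine Or.inr ⟨ρ i, ρ (i + 1), k, hkr, by simp [σ, hi], by simp [σ, hi1],
          ⟨ρ (i + 1), hstep i, mem_clsPar_self P _ _⟩, hge (i + 1) (by omega)⟩
    · refine ⟨(ClsPar P (2 * k) q, 2 * k), ⟨q, k, hkr, rfl, hk⟩, fun N => ?_⟩
      obtain ⟨i, hi, hiq⟩ := hqinf (max N i0)
      have : ¬ i < i0 := by omega
      exact ⟨i, le_trans (le_max_left _ _) hi, by simp [σ, this, hiq]⟩
end

section
/- An infinite word w is accepted by an NBW A if and only if the reduced split tree of A on w contains a left-recurring branch, i.e., an infinite branch that goes to a left child infinitely many times. -/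
/-- One level of the reduced split tree, with parents: for each node `Qi` of the
slice (processed left to right, `seen` collecting states already placed to the
left), record the triple (parent, left (accepting) child, right (nonaccepting)
child), before deletion of empty nodes. -/
def expandTriples {A Q : Type*} (δ : Q → A → Set Q) (F : Set Q) (a : A) :
    List (Set Q) → Set Q → List (Set Q × Set Q × Set Q)
  | [], _ => []
  | Qi :: rest, seen =>
    (Qi, (((⋃ q ∈ Qi, δ q a) ∩ F) \ seen), ((⋃ q ∈ Qi, δ q a) \ F) \ seen) ::
      expandTriples δ F a rest
        (seen ∪ ((((⋃ q ∈ Qi, δ q a) ∩ F) \ seen)) ∪ (((⋃ q ∈ Qi, δ q a) \ F) \ seen))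

/-- The successor slice: children of all nodes, with empty nodes removed. -/
noncomputable def sliceSucc {A Q : Type*} (δ : Q → A → Set Q) (F : Set Q) (a : A)
    (s : List (Set Q)) : List (Set Q) :=
  ((expandTriples δ F a s ∅).flatMap fun tr => [tr.2.1, tr.2.2]).filter
    fun S => @decide S.Nonempty (Classical.propDecidable _)

/-- The slices (levels) of the reduced split tree of `M` on `w`. -/
noncomputable def rstSlice {A Q : Type*} (M : NBW A Q) (w : ℕ → A) : ℕ → List (Set Q)
  | 0 => [{M.init}]
  | n + 1 => sliceSucc M.trans M.acc (w n) (rstSlice M w n)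

/-- `T` is the left (accepting) child of the node `S` of slice `s` on symbol `a`. -/
def LeftChild {A Q : Type*} (δ : Q → A → Set Q) (F : Set Q) (a : A)
    (s : List (Set Q)) (S T : Set Q) : Prop :=
  ∃ tr ∈ expandTriples δ F a s ∅, tr.1 = S ∧ tr.2.1 = T ∧ T.Nonempty

/-- `T` is the right (nonaccepting) child of the node `S` of slice `s` on `a`. -/
def RightChild {A Q : Type*} (δ : Q → A → Set Q) (F : Set Q) (a : A)
    (s : List (Set Q)) (S T : Set Q) : Prop :=
  ∃ tr ∈ expandTriples δ F a s ∅, tr.1 = S ∧ tr.2.2 = T ∧ T.Nonempty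

/-- `T` is a child of `S`. -/
def Child {A Q : Type*} (δ : Q → A → Set Q) (F : Set Q) (a : A)
    (s : List (Set Q)) (S T : Set Q) : Prop :=
  LeftChild δ F a s S T ∨ RightChild δ F a s S T

/-! If `w` is accepted, follow at each level the leftmost node that contains a state from which
the remaining suffix of `w` is accepted. Nodes to its left contain no such state, and a state
removed by the reduction was already placed in one of them; so whenever this branch turns right,
every accepting continuation of its node passes into the right child, outside `F`. A branch that
eventually only turns right would therefore trap a fixed accepting run outside `F` forever.

Conversely, every state of a child has a predecessor in its parent, so Kőnig's lemma gives a run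
through a left-recurring branch; it visits `F` at every left turn, hence, `Q` being finite, some
accepting state infinitely often. -/

theorem exists_seq_of_forall_exists_pred {Q : Type*} [Finite Q] {B : ℕ → Set Q}
    {R : ℕ → Q → Q → Prop} (hne : ∀ n, (B n).Nonempty)
    (hpred : ∀ n, ∀ y ∈ B (n + 1), ∃ x ∈ B n, R n x y) :
    ∃ ρ : ℕ → Q, ∀ n, ρ n ∈ B n ∧ R n (ρ n) (ρ (n + 1)) := by
  let Path (i : ℕ) := {p : Fin (i + 1) → Q // (∀ k : Fin (i + 1), p k ∈ B k) ∧
    ∀ k (hk : k < i), R k (p ⟨k, by omega⟩) (p ⟨k + 1, by omega⟩)}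
  have path_to : ∀ i, ∀ y ∈ B i, ∃ p : Path i, p.1 (Fin.last i) = y := by
    intro i
    induction i with
    | zero => exact fun y hy => ⟨⟨fun _ => y, fun k => by simpa [Fin.fin_one_eq_zero k] using hy,
        fun k hk => absurd hk k.not_lt_zero⟩, rfl⟩
    | succ i ih =>
      intro y hy
      obtain ⟨x, hx, hxy⟩ := hpred i y hy
      obtain ⟨p, rfl⟩ := ih x hx
      refine ⟨⟨fun k => if h : (k : ℕ) < i + 1 then p.1 ⟨k, h⟩ else y, fun k => ?_,
        fun k hk => ?_⟩, by simp⟩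
      · dsimp only
        split_ifs with h
        · exact p.2.1 ⟨k, h⟩
        · rwa [show (k : ℕ) = i + 1 by omega]
      · by_cases hki : k < i
        · simpa [hki, show k < i + 1 by omega] using p.2.2 k hki
        · obtain rfl : k = i := by omega
          simp only [Nat.lt_succ_self, dite_true, lt_irrefl, dite_false]
          exact hxy
  have (i : ℕ) : Nonempty (Path i) :=
    let ⟨y, hy⟩ := hne i
    ⟨(path_to i y hy).choose⟩
  obtain ⟨f, hf⟩ := exists_seq_forall_proj_of_forall_finite (α := Path)
    (fun hij p => ⟨fun k => p.1 (Fin.castLE (by omega) k), fun k => p.2.1 (Fin.castLE _ k),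
      fun k hk => p.2.2 k (by omega)⟩)
    (fun i p => rfl) (fun i j k hij hjk p => rfl) (fun i a => Set.toFinite _)
  refine ⟨fun n => (f n).1 (Fin.last n), fun n => ⟨(f n).2.1 (Fin.last n), ?_⟩⟩
  have h := congrArg (fun p => p.1 (Fin.last n)) (hf (Nat.le_succ n))
  dsimp only at h ⊢
  rw [← h]
  exact (f (n + 1)).2.2 n n.lt_succ_self

section SplitTree

variable {A Q : Type*}

def succSet (δ : Q → A → Set Q) (a : A) (S : Set Q) : Set Q := ⋃ q ∈ S, δ q a

def succSetList (δ : Q → A → Set Q) (a : A) (l : List (Set Q)) : Set Q :=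
  ⋃ S ∈ l, succSet δ a S

variable {δ : Q → A → Set Q} {F : Set Q} {a : A}

@[simp]
lemma succSetList_nil : succSetList δ a [] = ∅ := by
  simp [succSetList]

lemma succSetList_cons (S : Set Q) (l : List (Set Q)) :
    succSetList δ a (S :: l) = succSet δ a S ∪ succSetList δ a l := by
  simp [succSetList]

lemma expandTriples_cons (S : Set Q) (l : List (Set Q)) (s : Set Q) :
    expandTriples δ F a (S :: l) s =
      (S, (succSet δ a S ∩ F) \ s, (succSet δ a S \ F) \ s) ::
        expandTriples δ F a l (s ∪ succSet δ a S) := by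
  have hseen : s ∪ (succSet δ a S ∩ F) \ s ∪ (succSet δ a S \ F) \ s = s ∪ succSet δ a S := by
    ext; simp only [Set.mem_union, Set.mem_sdiff, Set.mem_inter_iff]; tauto
  rw [expandTriples, ← hseen]
  rfl

lemma expandTriples_append (l₁ l₂ : List (Set Q)) (s : Set Q) :
    expandTriples δ F a (l₁ ++ l₂) s =
      expandTriples δ F a l₁ s ++ expandTriples δ F a l₂ (s ∪ succSetList δ a l₁) := by
  induction l₁ generalizing s with
  | nil => simp [expandTriples]
  | cons S l₁ ih =>
    rw [List.cons_append, expandTriples_cons, expandTriples_cons, ih, succSetList_cons,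
      Set.union_assoc, List.cons_append]

lemma expandTriples_append_cons (l₁ l₂ : List (Set Q)) (S : Set Q) :
    expandTriples δ F a (l₁ ++ S :: l₂) ∅ = expandTriples δ F a l₁ ∅ ++
      (S, (succSet δ a S ∩ F) \ succSetList δ a l₁, (succSet δ a S \ F) \ succSetList δ a l₁) ::
        expandTriples δ F a l₂ (succSetList δ a l₁ ∪ succSet δ a S) := by
  rw [expandTriples_append, Set.empty_union, expandTriples_cons]

lemma mem_expandTriples_append_cons (l₁ l₂ : List (Set Q)) (S : Set Q) :
    (S, (succSet δ a S ∩ F) \ succSetList δ a l₁, (succSet δ a S \ F) \ succSetList δ a l₁) ∈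
      expandTriples δ F a (l₁ ++ S :: l₂) ∅ := by
  rw [expandTriples_append_cons]
  exact List.mem_append_right _ List.mem_cons_self

lemma sliceSucc_append_cons (l₁ l₂ : List (Set Q)) (S : Set Q) :
    ∃ rest, sliceSucc δ F a (l₁ ++ S :: l₂) = sliceSucc δ F a l₁ ++
      ((succSet δ a S ∩ F) \ succSetList δ a l₁ :: (succSet δ a S \ F) \ succSetList δ a l₁ ::
        rest).filter fun X => @decide X.Nonempty (Classical.propDecidable _) :=
  ⟨_, by rw [sliceSucc, expandTriples_append_cons, List.flatMap_append, List.filter_append]; rfl⟩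

lemma of_mem_expandTriples {l : List (Set Q)} {s : Set Q} {tr : Set Q × Set Q × Set Q}
    (h : tr ∈ expandTriples δ F a l s) :
    tr.1 ∈ l ∧ tr.2.1 ⊆ succSet δ a tr.1 ∩ F ∧ tr.2.2 ⊆ succSet δ a tr.1 \ F := by
  induction l generalizing s with
  | nil => simp [expandTriples] at h
  | cons S l ih =>
    rw [expandTriples_cons, List.mem_cons] at h
    rcases h with rfl | h
    · exact ⟨List.mem_cons_self, fun _ hx => hx.1, fun _ hx => hx.1⟩
    · obtain ⟨hmem, hL, hR⟩ := ih h
      exact ⟨List.mem_cons_of_mem _ hmem, hL, hR⟩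

lemma subset_succSetList_of_mem_sliceSucc {l : List (Set Q)} {T : Set Q}
    (hT : T ∈ sliceSucc δ F a l) : T ⊆ succSetList δ a l := by
  obtain ⟨tr, htr, hT⟩ := List.mem_flatMap.1 (List.mem_of_mem_filter hT)
  obtain ⟨hmem, hL, hR⟩ := of_mem_expandTriples htr
  intro x hx
  refine Set.mem_biUnion hmem ?_
  simp only [List.mem_cons, List.not_mem_nil, or_false] at hT
  rcases hT with rfl | rfl
  exacts [(hL hx).1, (hR hx).1]

lemma LeftChild.subset {s : List (Set Q)} {S T : Set Q} (h : LeftChild δ F a s S T) :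
    T ⊆ succSet δ a S ∩ F := by
  obtain ⟨tr, htr, rfl, rfl, -⟩ := h
  exact (of_mem_expandTriples htr).2.1

lemma RightChild.subset {s : List (Set Q)} {S T : Set Q} (h : RightChild δ F a s S T) :
    T ⊆ succSet δ a S \ F := by
  obtain ⟨tr, htr, rfl, rfl, -⟩ := h
  exact (of_mem_expandTriples htr).2.2

lemma Child.subset {s : List (Set Q)} {S T : Set Q} (h : Child δ F a s S T) :
    T ⊆ succSet δ a S := by
  rcases h with h | h
  exacts [fun _ hx => (h.subset hx).1, fun _ hx => (h.subset hx).1]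

lemma Child.nonempty {s : List (Set Q)} {S T : Set Q} (h : Child δ F a s S T) : T.Nonempty := by
  rcases h with ⟨_, _, _, _, h⟩ | ⟨_, _, _, _, h⟩ <;> exact h

end SplitTree

namespace NBW

variable {A Q : Type*} {M : NBW A Q} {w : ℕ → A}

theorem accepting_of_frequently_mem_acc [Finite Q] {ρ : ℕ → Q}
    (h : ∀ N, ∃ i ≥ N, ρ i ∈ M.acc) : M.Accepting ρ := by
  have hfreq : ∃ᶠ i in Filter.atTop, ∃ q, q ∈ M.acc ∧ ρ i = q :=
    Filter.frequently_atTop.2 fun N => (h N).imp fun i hi => ⟨hi.1, ρ i, hi.2, rfl⟩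
  obtain ⟨q, hq⟩ := Filter.frequently_exists.1 hfreq
  obtain ⟨i, hqacc, -⟩ := hq.exists
  exact ⟨q, hqacc, Filter.frequently_atTop.1 (hq.mono fun _ => And.right)⟩

def AcceptsFrom (M : NBW A Q) (w : ℕ → A) (n : ℕ) (q : Q) : Prop :=
  (fun i => w (n + i)) ∈ ({ M with init := q } : NBW A Q).Lang

theorem mem_lang_iff_acceptsFrom_zero : w ∈ M.Lang ↔ M.AcceptsFrom w 0 M.init := by
  simp [AcceptsFrom]

theorem acceptsFrom_add {n : ℕ} {ρ : ℕ → Q} (hρ : ∀ i, ρ (i + 1) ∈ M.trans (ρ i) (w (n + i)))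
    (hacc : M.Accepting ρ) (k : ℕ) : M.AcceptsFrom w (n + k) (ρ k) := by
  obtain ⟨f, hf, hinf⟩ := hacc
  refine ⟨fun i => ρ (k + i), ⟨rfl, fun i => ?_⟩, f, hf, fun N => ?_⟩
  · simpa only [← add_assoc] using hρ (k + i)
  · obtain ⟨i, hi, rfl⟩ := hinf (k + N)
    exact ⟨i - k, by omega, congrArg ρ (by omega)⟩

theorem AcceptsFrom.exists_mem_trans {n : ℕ} {q : Q} (h : M.AcceptsFrom w n q) :
    ∃ q' ∈ M.trans q (w n), M.AcceptsFrom w (n + 1) q' := by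
  obtain ⟨ρ, ⟨rfl, hρ⟩, hacc⟩ := h
  exact ⟨ρ 1, hρ 0, acceptsFrom_add hρ hacc 1⟩

theorem AcceptsFrom.of_mem_trans {n : ℕ} {q q' : Q} (hq' : q' ∈ M.trans q (w n))
    (h : M.AcceptsFrom w (n + 1) q') : M.AcceptsFrom w n q := by
  obtain ⟨ρ, ⟨rfl, hρ⟩, f, hf, hinf⟩ := h
  refine ⟨fun i => Nat.casesOn i q fun j => ρ j, ⟨rfl, fun i => ?_⟩, f, hf, fun N => ?_⟩
  · cases i with
    | zero => exact hq'
    | succ j => simpa only [add_right_comm n 1 j, ← add_assoc] using hρ j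
  · obtain ⟨i, hi, rfl⟩ := hinf N
    exact ⟨i + 1, by omega, rfl⟩

theorem not_acceptsFrom_of_mem_succSetList {n : ℕ} {l : List (Set Q)}
    (hl : ∀ u ∈ l, ∀ q ∈ u, ¬ M.AcceptsFrom w n q) {q' : Q}
    (hq' : q' ∈ succSetList M.trans (w n) l) : ¬ M.AcceptsFrom w (n + 1) q' := by
  simp only [succSetList, succSet, Set.mem_iUnion] at hq'
  obtain ⟨u, hu, q, hq, hq'⟩ := hq'
  exact fun h => hl u hu q hq (h.of_mem_trans hq')

def IsLeftmostAcceptingNode (M : NBW A Q) (w : ℕ → A) (n : ℕ) (S : Set Q) : Prop :=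
  (∃ q ∈ S, M.AcceptsFrom w n q) ∧
    ∃ l₁ l₂, rstSlice M w n = l₁ ++ S :: l₂ ∧ ∀ u ∈ l₁, ∀ q ∈ u, ¬ M.AcceptsFrom w n q

def CarriesAcceptingSuccs (M : NBW A Q) (w : ℕ → A) (n : ℕ) (S T : Set Q) : Prop :=
  ∀ q ∈ S, ∀ q' ∈ M.trans q (w n), M.AcceptsFrom w (n + 1) q' → q' ∈ T \ M.acc

theorem IsLeftmostAcceptingNode.exists_child {n : ℕ} {S : Set Q}
    (h : M.IsLeftmostAcceptingNode w n S) :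
    ∃ T, M.IsLeftmostAcceptingNode w (n + 1) T ∧
      (LeftChild M.trans M.acc (w n) (rstSlice M w n) S T ∨
        RightChild M.trans M.acc (w n) (rstSlice M w n) S T ∧
          M.CarriesAcceptingSuccs w n S T) := by
  obtain ⟨⟨q, hqS, hq⟩, l₁, l₂, hsl, hl₁⟩ := h
  have htr := mem_expandTriples_append_cons (δ := M.trans) (F := M.acc) (a := w n) l₁ l₂ S
  obtain ⟨rest, hslice⟩ := sliceSucc_append_cons (δ := M.trans) (F := M.acc) (a := w n) l₁ l₂ S
  rw [← hsl] at htr hslice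
  set seen := succSetList M.trans (w n) l₁
  set L := (succSet M.trans (w n) S ∩ M.acc) \ seen
  set R := (succSet M.trans (w n) S \ M.acc) \ seen
  set p : Set Q → Bool := fun X => @decide X.Nonempty (Classical.propDecidable _)
  have hseen : ∀ x ∈ seen, ¬ M.AcceptsFrom w (n + 1) x :=
    fun x hx => not_acceptsFrom_of_mem_succSetList hl₁ hx
  have hprefix : ∀ u ∈ sliceSucc M.trans M.acc (w n) l₁, ∀ x ∈ u, ¬ M.AcceptsFrom w (n + 1) x :=
    fun u hu x hx => hseen x (subset_succSetList_of_mem_sliceSucc hu hx)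
  by_cases hL : ∃ x ∈ L, M.AcceptsFrom w (n + 1) x
  · obtain ⟨x, hxL, hx⟩ := hL
    have hsl' : rstSlice M w (n + 1) =
        sliceSucc M.trans M.acc (w n) l₁ ++ L :: (R :: rest).filter p := by
      have hpL : p L = true := by simpa only [p, decide_eq_true_eq] using ⟨x, hxL⟩
      rw [rstSlice, hslice, List.filter_cons_of_pos hpL]
    exact ⟨L, ⟨⟨x, hxL, hx⟩, _, _, hsl', hprefix⟩, Or.inl ⟨_, htr, rfl, rfl, x, hxL⟩⟩
  · have hcarry : M.CarriesAcceptingSuccs w n S R := by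
      intro r hr r' hr' hacc
      have hnotF : r' ∉ M.acc := fun hF =>
        hL ⟨r', ⟨⟨Set.mem_biUnion hr hr', hF⟩, fun hs => hseen r' hs hacc⟩, hacc⟩
      exact ⟨⟨⟨Set.mem_biUnion hr hr', hnotF⟩, fun hs => hseen r' hs hacc⟩, hnotF⟩
    obtain ⟨q', hq'δ, hq'⟩ := hq.exists_mem_trans
    have hq'R : q' ∈ R := (hcarry q hqS q' hq'δ hq').1
    have hsl' : rstSlice M w (n + 1) =
        (sliceSucc M.trans M.acc (w n) l₁ ++ [L].filter p) ++ R :: rest.filter p := by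
      have hpR : p R = true := by simpa only [p, decide_eq_true_eq] using ⟨q', hq'R⟩
      rw [rstSlice, hslice, List.append_assoc]
      by_cases hpL : p L <;> simp [hpL, hpR]
    refine ⟨R, ⟨⟨q', hq'R, hq'⟩, _, _, hsl', ?_⟩, Or.inr ⟨⟨_, htr, rfl, rfl, q', hq'R⟩, hcarry⟩⟩
    intro u hu
    rcases List.mem_append.1 hu with hu | hu
    · exact hprefix u hu
    · obtain rfl := List.mem_singleton.1 (List.mem_of_mem_filter hu)
      exact fun x hx hacc => hL ⟨x, hx, hacc⟩

theorem exists_ge_leftChild_of_carries (b : ℕ → Set Q) (N : ℕ)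
    (hgood : ∃ q ∈ b N, M.AcceptsFrom w N q)
    (hstep : ∀ n, LeftChild M.trans M.acc (w n) (rstSlice M w n) (b n) (b (n + 1)) ∨
      M.CarriesAcceptingSuccs w n (b n) (b (n + 1))) :
    ∃ n ≥ N, LeftChild M.trans M.acc (w n) (rstSlice M w n) (b n) (b (n + 1)) := by
  by_contra! hright
  have hcarry (k : ℕ) : M.CarriesAcceptingSuccs w (N + k) (b (N + k)) (b (N + k + 1)) :=
    (hstep _).resolve_left (hright _ (by omega))
  obtain ⟨q, hq, ρ, ⟨rfl, hρ⟩, hacc⟩ := hgood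
  have hmem (k : ℕ) : ρ k ∈ b (N + k) := by
    induction k with
    | zero => exact hq
    | succ k ih => exact (hcarry k _ ih _ (hρ k) (acceptsFrom_add hρ hacc (k + 1))).1
  have ⟨f, hf, hinf⟩ := hacc
  obtain ⟨_ | k, hk, rfl⟩ := hinf 1
  · omega
  · exact (hcarry k _ (hmem k) _ (hρ k) (acceptsFrom_add hρ hacc (k + 1))).2 hf

def IsLeftRecurringBranch (M : NBW A Q) (w : ℕ → A) (b : ℕ → Set Q) : Prop :=
  b 0 = {M.init} ∧ (∀ n, Child M.trans M.acc (w n) (rstSlice M w n) (b n) (b (n + 1))) ∧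
    ∀ N, ∃ n ≥ N, LeftChild M.trans M.acc (w n) (rstSlice M w n) (b n) (b (n + 1))

theorem exists_isLeftRecurringBranch_of_mem_lang (h : w ∈ M.Lang) :
    ∃ b, M.IsLeftRecurringBranch w b := by
  choose! next hnext using
    fun n (S : Set Q) (hS : M.IsLeftmostAcceptingNode w n S) => hS.exists_child
  let b (n : ℕ) : Set Q := Nat.rec {M.init} next n
  have hb (n : ℕ) : M.IsLeftmostAcceptingNode w n (b n) := by
    induction n with
    | zero => exact ⟨⟨M.init, rfl, mem_lang_iff_acceptsFrom_zero.1 h⟩, [], [], rfl, by simp⟩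
    | succ n ih => exact (hnext n _ ih).1
  have hstep (n : ℕ) := (hnext n _ (hb n)).2
  exact ⟨b, rfl, fun n => (hstep n).imp id And.left,
    fun N => exists_ge_leftChild_of_carries b N (hb N).1 fun n => (hstep n).imp id And.right⟩

theorem IsLeftRecurringBranch.mem_lang [Finite Q] {b : ℕ → Set Q}
    (hb : M.IsLeftRecurringBranch w b) : w ∈ M.Lang := by
  obtain ⟨hb0, hchild, hleft⟩ := hb
  have hne : ∀ n, (b n).Nonempty
    | 0 => hb0 ▸ Set.singleton_nonempty _
    | n + 1 => (hchild n).nonempty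
  have hpred (n : ℕ) (y : Q) (hy : y ∈ b (n + 1)) : ∃ x ∈ b n, y ∈ M.trans x (w n) := by
    simpa only [succSet, Set.mem_iUnion₂, exists_prop] using (hchild n).subset hy
  obtain ⟨ρ, hρ⟩ := exists_seq_of_forall_exists_pred hne hpred
  refine ⟨ρ, ⟨by simpa [hb0] using (hρ 0).1, fun i => (hρ i).2⟩,
    accepting_of_frequently_mem_acc fun N => ?_⟩
  obtain ⟨n, hn, hL⟩ := hleft N
  exact ⟨n + 1, by omega, (hL.subset (hρ (n + 1)).1).2⟩

end NBW

/-- A word is accepted by an NBW iff its reduced split tree has a left-recurring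
branch. -/
theorem stmt7 {A Q : Type*} [Fintype Q] (M : NBW A Q) (w : ℕ → A) :
    w ∈ M.Lang ↔
      ∃ b : ℕ → Set Q, b 0 = {M.init} ∧
        (∀ n, Child M.trans M.acc (w n) (rstSlice M w n) (b n) (b (n + 1))) ∧
        (∀ N, ∃ n ≥ N, LeftChild M.trans M.acc (w n) (rstSlice M w n) (b n) (b (n + 1))) :=
  ⟨NBW.exists_isLeftRecurringBranch_of_mem_lang,
    fun ⟨_, hb⟩ => NBW.IsLeftRecurringBranch.mem_lang hb⟩
end
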